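/- For the shifted-only rank-1 lattice with N = 5, d = 2, fixed generating vector g = (1/5, 1/5), uniform shift S on ((1/5){0,...,4})^2, independent jitters, and boxes Q = [3/5,1)^2, R = [4/5,1)^2, one has P(p_1 ∈ Q, p_2 ∈ R) = 1/100 > 4/625 = P(p_1 ∈ Q)·P(p_2 ∈ R); hence a fixed generating vector can fail pairwise negative dependence. -/

import Mathlib

open MeasureTheory ProbabilityTheory

noncomputable instance (N : ℕ) : MeasurableSpace (ZMod N) := ⊤
instance (N : ℕ) : MeasurableSingletonClass (ZMod N) := ⟨fun _ => trivial⟩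
noncomputable instance (n : ℕ) : MeasurableSpace (Equiv.Perm (Fin n)) := ⊤

/-- The uniform probability measure on a finite type. -/
noncomputable def unif (α : Type*) [Fintype α] [MeasurableSpace α] : Measure α :=
  (Fintype.card α : ENNReal)⁻¹ • Measure.count

/-- Sample space of the shifted-only rank-1 lattice with fixed generating vector, `N = 5`,
`d = 2`: a uniform permutation `π`, a uniform grid shift `S ∈ ((1/5){0,…,4})²` (encoded by
`(ZMod 5)²`), and independent jitters `J_1,…,J_5` uniform on `[0,1/5)²`. -/
def FixedGenSpace : Type := Equiv.Perm (Fin 5) × (Fin 2 → ZMod 5) × (Fin 5 → Fin 2 → ℝ)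

noncomputable instance : MeasurableSpace FixedGenSpace :=
  inferInstanceAs (MeasurableSpace (Equiv.Perm (Fin 5) × (Fin 2 → ZMod 5) × (Fin 5 → Fin 2 → ℝ)))

noncomputable def fixedGenMeasure : Measure FixedGenSpace :=
  (unif (Equiv.Perm (Fin 5))).prod ((unif (Fin 2 → ZMod 5)).prod
    (Measure.pi fun _ : Fin 5 => Measure.pi fun _ : Fin 2 =>
      (5 : ENNReal) • volume.restrict (Set.Ico (0 : ℝ) (1 / 5))))

/-- The `i`-th coordinate of the `j`-th point: `p_j = y_{π(j)} + S + J_j mod 1` with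
`y_k = (k-1)·(1/5, 1/5) mod 1`, i.e. the fixed generating vector is `g = (1/5, 1/5)`. -/
noncomputable def fixedGenPoint (j : Fin 5) (i : Fin 2) (ω : FixedGenSpace) : ℝ :=
  (((((ω.1 j : ℕ) : ZMod 5) + ω.2.1 i).val : ℝ)) / 5 + ω.2.2 j i

instance (n : ℕ) : MeasurableSingletonClass (Equiv.Perm (Fin n)) := ⟨fun _ => trivial⟩

noncomputable def kappa : Measure ℝ := (5 : ENNReal) • volume.restrict (Set.Ico (0 : ℝ) (1 / 5))

noncomputable def nu2 : Measure (Fin 2 → ℝ) := Measure.pi fun _ => kappa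
noncomputable def nu : Measure (Fin 5 → Fin 2 → ℝ) := Measure.pi fun _ => nu2

lemma kappa_apply (s : Set ℝ) : kappa s = 5 * volume (s ∩ Set.Ico (0 : ℝ) (1 / 5)) := by
  rw [kappa, Measure.smul_apply, Measure.restrict_apply' measurableSet_Ico, smul_eq_mul]

lemma kappa_univ : kappa Set.univ = 1 := by
  rw [kappa_apply, Set.univ_inter, Real.volume_Ico]
  rw [show ((1:ℝ)/5 - 0) = 1/5 by ring]
  rw [show (5 : ENNReal) = ENNReal.ofReal 5 by norm_num, ← ENNReal.ofReal_mul (by norm_num)]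
  norm_num

instance : IsProbabilityMeasure kappa := ⟨kappa_univ⟩
instance : IsProbabilityMeasure nu2 := by unfold nu2; infer_instance
instance : IsProbabilityMeasure nu := by unfold nu; infer_instance

lemma shift_set (c a : ℝ) : {x : ℝ | c + x ∈ Set.Ico a 1} = Set.Ico (a - c) (1 - c) := by
  ext x; simp [Set.mem_Ico]; constructor <;> intro h <;> constructor <;> linarith [h.1, h.2]

lemma kappa_one (c a : ℝ) (h1 : a ≤ c) (h2 : c + 1/5 ≤ 1) :
    kappa {x : ℝ | c + x ∈ Set.Ico a 1} = 1 := by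
  rw [shift_set, kappa_apply]
  have : Set.Ico (a - c) (1 - c) ∩ Set.Ico (0:ℝ) (1/5) = Set.Ico (0:ℝ) (1/5) := by
    apply Set.inter_eq_self_of_subset_right
    intro x hx; simp [Set.mem_Ico] at hx ⊢; constructor <;> linarith [hx.1, hx.2]
  rw [this, Real.volume_Ico, show ((1:ℝ)/5 - 0) = 1/5 by ring,
    show (5 : ENNReal) = ENNReal.ofReal 5 by norm_num, ← ENNReal.ofReal_mul (by norm_num)]
  norm_num

lemma kappa_zero (c a : ℝ) (h : c + 1/5 ≤ a) :
    kappa {x : ℝ | c + x ∈ Set.Ico a 1} = 0 := by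
  rw [shift_set, kappa_apply]
  have : Set.Ico (a - c) (1 - c) ∩ Set.Ico (0:ℝ) (1/5) = ∅ := by
    ext x; simp [Set.mem_Ico]; intro h1 _ _; linarith
  rw [this]; simp

lemma kappa_val (z : ZMod 5) (m : ℕ) :
    kappa {x : ℝ | ((z.val : ℝ)) / 5 + x ∈ Set.Ico ((m : ℝ)/5) 1} =
      if m ≤ z.val then 1 else 0 := by
  have hz : z.val ≤ 4 := Nat.lt_succ_iff.mp (ZMod.val_lt z)
  split
  · rename_i h
    have hmr : (m : ℝ) ≤ (z.val : ℝ) := Nat.cast_le.mpr h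
    have hzr : (z.val : ℝ) ≤ 4 := by exact_mod_cast Nat.cast_le.mpr hz
    exact kappa_one _ _ (by linarith) (by linarith)
  · rename_i h
    have hmr : (z.val : ℝ) + 1 ≤ (m : ℝ) := by exact_mod_cast Nat.succ_le_of_lt (Nat.lt_of_not_le h)
    exact kappa_zero _ _ (by linarith)

lemma nu2_pair (A B : Set ℝ) : nu2 {x | x 0 ∈ A ∧ x 1 ∈ B} = kappa A * kappa B := by
  have h : {x : Fin 2 → ℝ | x 0 ∈ A ∧ x 1 ∈ B} = Set.univ.pi ![A, B] := by
    ext x; simp [Set.mem_pi, Fin.forall_fin_two]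
  rw [h, nu2, Measure.pi_pi, Fin.prod_univ_two]
  simp

lemma nu_pair (T0 T1 : Set (Fin 2 → ℝ)) :
    nu {J : Fin 5 → Fin 2 → ℝ | J 0 ∈ T0 ∧ J 1 ∈ T1} = nu2 T0 * nu2 T1 := by
  have h : {J : Fin 5 → Fin 2 → ℝ | J 0 ∈ T0 ∧ J 1 ∈ T1} =
      Set.univ.pi ![T0, T1, Set.univ, Set.univ, Set.univ] := by
    ext J
    constructor
    · rintro ⟨h0, h1⟩ j -
      fin_cases j <;> simp_all
    · intro h
      exact ⟨by simpa using h 0 (Set.mem_univ _), by simpa using h 1 (Set.mem_univ _)⟩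
  rw [h, nu, Measure.pi_pi, Fin.prod_univ_five]
  simp [measure_univ]

lemma nu_first (T0 : Set (Fin 2 → ℝ)) :
    nu {J : Fin 5 → Fin 2 → ℝ | J 0 ∈ T0} = nu2 T0 := by
  have h : {J : Fin 5 → Fin 2 → ℝ | J 0 ∈ T0} =
      {J : Fin 5 → Fin 2 → ℝ | J 0 ∈ T0 ∧ J 1 ∈ Set.univ} := by ext J; simp
  rw [h, nu_pair, measure_univ, mul_one]

lemma nu_second (T1 : Set (Fin 2 → ℝ)) :
    nu {J : Fin 5 → Fin 2 → ℝ | J 1 ∈ T1} = nu2 T1 := by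
  have h : {J : Fin 5 → Fin 2 → ℝ | J 1 ∈ T1} =
      {J : Fin 5 → Fin 2 → ℝ | J 0 ∈ Set.univ ∧ J 1 ∈ T1} := by ext J; simp
  rw [h, nu_pair, measure_univ, one_mul]

lemma unif_prob (α : Type*) [Fintype α] [Nonempty α] [MeasurableSpace α]
    [MeasurableSingletonClass α] : IsProbabilityMeasure (unif α) := by
  constructor
  rw [unif, Measure.smul_apply, Measure.count_univ, ENat.card_eq_coe_fintype_card, smul_eq_mul]
  exact ENNReal.inv_mul_cancel (by exact_mod_cast Fintype.card_ne_zero (α := α)) (ENNReal.natCast_ne_top _)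

instance : IsProbabilityMeasure (unif (Equiv.Perm (Fin 5))) := unif_prob _
instance : IsProbabilityMeasure (unif (Fin 2 → ZMod 5)) := unif_prob _

lemma unif_lintegral {α : Type*} [Fintype α] [MeasurableSpace α] [MeasurableSingletonClass α]
    (f : α → ENNReal) :
    ∫⁻ a, f a ∂(unif α) = (Fintype.card α : ENNReal)⁻¹ * ∑ a, f a := by
  rw [unif, lintegral_smul_measure, lintegral_count, tsum_fintype, smul_eq_mul]

lemma measurable_point_gen (F : Equiv.Perm (Fin 5) → ZMod 5 → ℝ) (j : Fin 5) (i : Fin 2) :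
    Measurable fun ω : Equiv.Perm (Fin 5) × (Fin 2 → ZMod 5) × (Fin 5 → Fin 2 → ℝ) =>
      F ω.1 (ω.2.1 i) + ω.2.2 j i := by
  apply Measurable.add
  · have h1 : Measurable fun ω : Equiv.Perm (Fin 5) × (Fin 2 → ZMod 5) × (Fin 5 → Fin 2 → ℝ) =>
        (ω.1, ω.2.1 i) :=
      measurable_fst.prodMk ((measurable_pi_apply i).comp (measurable_fst.comp measurable_snd))
    exact (measurable_of_countable (fun p : Equiv.Perm (Fin 5) × ZMod 5 => F p.1 p.2)).comp h1
  · exact (measurable_pi_apply i).comp ((measurable_pi_apply j).comp (measurable_snd.comp measurable_snd))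

lemma measurable_point (j : Fin 5) (i : Fin 2) : Measurable (fixedGenPoint j i) :=
  measurable_point_gen (fun π z => ((((π j : ℕ) : ZMod 5) + z).val : ℝ) / 5) j i

lemma measurable_event0 : MeasurableSet {ω : FixedGenSpace |
    ∀ i, fixedGenPoint 0 i ω ∈ Set.Ico (3 / 5 : ℝ) 1} := by
  have h : {ω : FixedGenSpace | ∀ i, fixedGenPoint 0 i ω ∈ Set.Ico (3 / 5 : ℝ) 1} =
      ⋂ i, fixedGenPoint 0 i ⁻¹' Set.Ico (3 / 5 : ℝ) 1 := by
    ext ω; simp [Set.mem_iInter]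
  rw [h]
  exact MeasurableSet.iInter fun i => (measurable_point 0 i) measurableSet_Ico

lemma measurable_event1 : MeasurableSet {ω : FixedGenSpace |
    ∀ i, fixedGenPoint 1 i ω ∈ Set.Ico (4 / 5 : ℝ) 1} := by
  have h : {ω : FixedGenSpace | ∀ i, fixedGenPoint 1 i ω ∈ Set.Ico (4 / 5 : ℝ) 1} =
      ⋂ i, fixedGenPoint 1 i ⁻¹' Set.Ico (4 / 5 : ℝ) 1 := by
    ext ω; simp [Set.mem_iInter]
  rw [h]
  exact MeasurableSet.iInter fun i => (measurable_point 1 i) measurableSet_Ico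

lemma measurable_event01 : MeasurableSet {ω : FixedGenSpace |
    (∀ i, fixedGenPoint 0 i ω ∈ Set.Ico (3 / 5 : ℝ) 1) ∧
    (∀ i, fixedGenPoint 1 i ω ∈ Set.Ico (4 / 5 : ℝ) 1)} :=
  measurable_event0.inter measurable_event1

instance : SFinite ((unif (Fin 2 → ZMod 5)).prod nu) := inferInstance

lemma measure_fixedGen (E : Set FixedGenSpace)
    (hE : MeasurableSet E) :
    fixedGenMeasure E = (Fintype.card (Equiv.Perm (Fin 5)) : ENNReal)⁻¹ *
      ∑ π : Equiv.Perm (Fin 5), ((Fintype.card (Fin 2 → ZMod 5) : ENNReal)⁻¹ *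
        ∑ S : Fin 2 → ZMod 5, nu {J : Fin 5 → Fin 2 → ℝ | (π, S, J) ∈ E}) := by
  have h0 : fixedGenMeasure E = ((unif (Equiv.Perm (Fin 5))).prod
      ((unif (Fin 2 → ZMod 5)).prod nu)) E := rfl
  rw [h0, Measure.prod_apply hE, unif_lintegral]
  congr 1
  apply Finset.sum_congr rfl
  intro π _
  rw [Measure.prod_apply (measurable_prodMk_left hE), unif_lintegral]
  rfl

lemma kappa_val' (z : ZMod 5) (m : ℕ) (a : ℝ) (ha : a = (m : ℝ) / 5) :
    kappa {x : ℝ | ((z.val : ℝ)) / 5 + x ∈ Set.Ico a 1} = if m ≤ z.val then 1 else 0 := by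
  rw [ha]; exact kappa_val z m

def n0 (π : Equiv.Perm (Fin 5)) (S : Fin 2 → ZMod 5) : ℕ :=
  (if 3 ≤ (((π 0 : ℕ) : ZMod 5) + S 0).val then 1 else 0) *
  (if 3 ≤ (((π 0 : ℕ) : ZMod 5) + S 1).val then 1 else 0)

def n1 (π : Equiv.Perm (Fin 5)) (S : Fin 2 → ZMod 5) : ℕ :=
  (if 4 ≤ (((π 1 : ℕ) : ZMod 5) + S 0).val then 1 else 0) *
  (if 4 ≤ (((π 1 : ℕ) : ZMod 5) + S 1).val then 1 else 0)

lemma nu2_cond (π : Equiv.Perm (Fin 5)) (S : Fin 2 → ZMod 5) (j : Fin 5) (m : ℕ) (a : ℝ)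
    (ha : a = (m : ℝ) / 5) :
    nu2 {x : Fin 2 → ℝ |
        ∀ i, (((((π j : ℕ) : ZMod 5) + S i).val : ℝ)) / 5 + x i ∈ Set.Ico a 1} =
      ((if m ≤ (((π j : ℕ) : ZMod 5) + S 0).val then 1 else 0) *
       (if m ≤ (((π j : ℕ) : ZMod 5) + S 1).val then 1 else 0) : ℕ) := by
  have h : {x : Fin 2 → ℝ |
        ∀ i, (((((π j : ℕ) : ZMod 5) + S i).val : ℝ)) / 5 + x i ∈ Set.Ico a 1} =
      {x : Fin 2 → ℝ |
        x 0 ∈ {t : ℝ | (((((π j : ℕ) : ZMod 5) + S 0).val : ℝ)) / 5 + t ∈ Set.Ico a 1} ∧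
        x 1 ∈ {t : ℝ | (((((π j : ℕ) : ZMod 5) + S 1).val : ℝ)) / 5 + t ∈ Set.Ico a 1}} := by
    ext x; exact Fin.forall_fin_two
  rw [h, nu2_pair, kappa_val' _ m a ha, kappa_val' _ m a ha]
  push_cast [apply_ite (Nat.cast : ℕ → ENNReal)]
  ring

lemma nu_cond0 (π : Equiv.Perm (Fin 5)) (S : Fin 2 → ZMod 5) :
    nu {J : Fin 5 → Fin 2 → ℝ | (π, S, J) ∈
        {ω : FixedGenSpace | ∀ i, fixedGenPoint 0 i ω ∈ Set.Ico (3 / 5 : ℝ) 1}} =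
      (n0 π S : ENNReal) := by
  have h : {J : Fin 5 → Fin 2 → ℝ | (π, S, J) ∈
        {ω : FixedGenSpace | ∀ i, fixedGenPoint 0 i ω ∈ Set.Ico (3 / 5 : ℝ) 1}} =
      {J : Fin 5 → Fin 2 → ℝ | J 0 ∈ {x : Fin 2 → ℝ |
        ∀ i, (((((π 0 : ℕ) : ZMod 5) + S i).val : ℝ)) / 5 + x i ∈ Set.Ico (3 / 5 : ℝ) 1}} := rfl
  rw [h, nu_first, nu2_cond π S 0 3 (3 / 5 : ℝ) (by norm_num), n0]

lemma nu_cond1 (π : Equiv.Perm (Fin 5)) (S : Fin 2 → ZMod 5) :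
    nu {J : Fin 5 → Fin 2 → ℝ | (π, S, J) ∈
        {ω : FixedGenSpace | ∀ i, fixedGenPoint 1 i ω ∈ Set.Ico (4 / 5 : ℝ) 1}} =
      (n1 π S : ENNReal) := by
  have h : {J : Fin 5 → Fin 2 → ℝ | (π, S, J) ∈
        {ω : FixedGenSpace | ∀ i, fixedGenPoint 1 i ω ∈ Set.Ico (4 / 5 : ℝ) 1}} =
      {J : Fin 5 → Fin 2 → ℝ | J 1 ∈ {x : Fin 2 → ℝ |
        ∀ i, (((((π 1 : ℕ) : ZMod 5) + S i).val : ℝ)) / 5 + x i ∈ Set.Ico (4 / 5 : ℝ) 1}} := rfl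
  rw [h, nu_second, nu2_cond π S 1 4 (4 / 5 : ℝ) (by norm_num), n1]

lemma nu_cond01 (π : Equiv.Perm (Fin 5)) (S : Fin 2 → ZMod 5) :
    nu {J : Fin 5 → Fin 2 → ℝ | (π, S, J) ∈
        {ω : FixedGenSpace | (∀ i, fixedGenPoint 0 i ω ∈ Set.Ico (3 / 5 : ℝ) 1) ∧
          (∀ i, fixedGenPoint 1 i ω ∈ Set.Ico (4 / 5 : ℝ) 1)}} =
      ((n0 π S * n1 π S : ℕ) : ENNReal) := by
  have h : {J : Fin 5 → Fin 2 → ℝ | (π, S, J) ∈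
        {ω : FixedGenSpace | (∀ i, fixedGenPoint 0 i ω ∈ Set.Ico (3 / 5 : ℝ) 1) ∧
          (∀ i, fixedGenPoint 1 i ω ∈ Set.Ico (4 / 5 : ℝ) 1)}} =
      {J : Fin 5 → Fin 2 → ℝ |
        J 0 ∈ {x : Fin 2 → ℝ |
          ∀ i, (((((π 0 : ℕ) : ZMod 5) + S i).val : ℝ)) / 5 + x i ∈ Set.Ico (3 / 5 : ℝ) 1} ∧
        J 1 ∈ {x : Fin 2 → ℝ |
          ∀ i, (((((π 1 : ℕ) : ZMod 5) + S i).val : ℝ)) / 5 + x i ∈ Set.Ico (4 / 5 : ℝ) 1}} := rfl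
  rw [h, nu_pair, nu2_cond π S 0 3 (3 / 5 : ℝ) (by norm_num),
    nu2_cond π S 1 4 (4 / 5 : ℝ) (by norm_num), n0, n1]
  push_cast [apply_ite (Nat.cast : ℕ → ENNReal)]
  ring

lemma card_perm5 : (Fintype.card (Equiv.Perm (Fin 5))) = 120 := by
  simp [Fintype.card_perm, Nat.factorial]

lemma card_S25 : Fintype.card (Fin 2 → ZMod 5) = 25 := by
  simp [Fintype.card_fun, ZMod.card]

set_option maxRecDepth 100000 in
lemma count01 : (∑ π : Equiv.Perm (Fin 5), ∑ S : Fin 2 → ZMod 5, n0 π S * n1 π S) = 30 := by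
  decide

set_option maxRecDepth 100000 in
lemma count0 : (∑ π : Equiv.Perm (Fin 5), ∑ S : Fin 2 → ZMod 5, n0 π S) = 480 := by decide

set_option maxRecDepth 100000 in
lemma count1 : (∑ π : Equiv.Perm (Fin 5), ∑ S : Fin 2 → ZMod 5, n1 π S) = 120 := by decide

lemma enn_arith (a b c x y : ℕ) (ha : a ≠ 0) (hb : b ≠ 0) (hy : y ≠ 0)
    (h : c * y = x * (a * b)) :
    ((a : ENNReal))⁻¹ * (((b : ENNReal))⁻¹ * (c : ENNReal)) = (x : ENNReal) / (y : ENNReal) := by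
  refine (ENNReal.toReal_eq_toReal_iff' ?_ ?_).mp ?_
  · exact ENNReal.mul_ne_top (ENNReal.inv_ne_top.mpr (by exact_mod_cast ha))
      (ENNReal.mul_ne_top (ENNReal.inv_ne_top.mpr (by exact_mod_cast hb))
        (ENNReal.natCast_ne_top c))
  · exact (ENNReal.div_lt_top (ENNReal.natCast_ne_top x) (by exact_mod_cast hy)).ne
  · have ha' : (a : ℝ) ≠ 0 := by exact_mod_cast ha
    have hb' : (b : ℝ) ≠ 0 := by exact_mod_cast hb
    have hy' : (y : ℝ) ≠ 0 := by exact_mod_cast hy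
    have h' : (c : ℝ) * y = x * (a * b) := by exact_mod_cast h
    simp only [ENNReal.toReal_mul, ENNReal.toReal_div, ENNReal.toReal_inv,
      ENNReal.toReal_natCast]
    field_simp
    linarith [h']

lemma enn_lt_final : (4 / 625 : ENNReal) < 1 / 100 := by
  refine (ENNReal.toReal_lt_toReal ?_ ?_).mp ?_
  · exact (ENNReal.div_lt_top (by norm_num) (by norm_num)).ne
  · exact (ENNReal.div_lt_top (by norm_num) (by norm_num)).ne
  · rw [ENNReal.toReal_div, ENNReal.toReal_div]
    norm_num

/-- For the shifted-only rank-1 lattice with `N = 5`, `d = 2`, fixed generating vector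
`g = (1/5, 1/5)`, and boxes `Q = [3/5,1)²`, `R = [4/5,1)²`, one has
`P(p_1 ∈ Q, p_2 ∈ R) = 1/100 > 4/625 = P(p_1 ∈ Q)·P(p_2 ∈ R)`; hence a fixed generating
vector can fail pairwise negative dependence. -/
theorem fixed_generating_vector_fails_pairwise_negative_dependence :
    fixedGenMeasure {ω | (∀ i, fixedGenPoint 0 i ω ∈ Set.Ico (3 / 5 : ℝ) 1) ∧
        (∀ i, fixedGenPoint 1 i ω ∈ Set.Ico (4 / 5 : ℝ) 1)} = 1 / 100 ∧
    fixedGenMeasure {ω | ∀ i, fixedGenPoint 0 i ω ∈ Set.Ico (3 / 5 : ℝ) 1} *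
      fixedGenMeasure {ω | ∀ i, fixedGenPoint 1 i ω ∈ Set.Ico (4 / 5 : ℝ) 1} = 4 / 625 ∧
    (4 / 625 : ENNReal) < 1 / 100 := by
  have h01 : fixedGenMeasure {ω | (∀ i, fixedGenPoint 0 i ω ∈ Set.Ico (3 / 5 : ℝ) 1) ∧
      (∀ i, fixedGenPoint 1 i ω ∈ Set.Ico (4 / 5 : ℝ) 1)} = 1 / 100 := by
    rw [measure_fixedGen _ measurable_event01]
    simp only [nu_cond01, ← Finset.mul_sum, ← Nat.cast_sum, count01, card_perm5, card_S25]
    exact_mod_cast enn_arith 120 25 30 1 100 (by norm_num) (by norm_num) (by norm_num) (by norm_num)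
  have h0 : fixedGenMeasure {ω | ∀ i, fixedGenPoint 0 i ω ∈ Set.Ico (3 / 5 : ℝ) 1} = 4 / 25 := by
    rw [measure_fixedGen _ measurable_event0]
    simp only [nu_cond0, ← Finset.mul_sum, ← Nat.cast_sum, count0, card_perm5, card_S25]
    exact_mod_cast enn_arith 120 25 480 4 25 (by norm_num) (by norm_num) (by norm_num) (by norm_num)
  have h1 : fixedGenMeasure {ω | ∀ i, fixedGenPoint 1 i ω ∈ Set.Ico (4 / 5 : ℝ) 1} = 1 / 25 := by
    rw [measure_fixedGen _ measurable_event1]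
    simp only [nu_cond1, ← Finset.mul_sum, ← Nat.cast_sum, count1, card_perm5, card_S25]
    exact_mod_cast enn_arith 120 25 120 1 25 (by norm_num) (by norm_num) (by norm_num) (by norm_num)
  refine ⟨h01, ?_, enn_lt_final⟩
  rw [h0, h1]
  refine (ENNReal.toReal_eq_toReal_iff' ?_ ?_).mp ?_
  · exact ENNReal.mul_ne_top (ENNReal.div_lt_top (by norm_num) (by norm_num)).ne
      (ENNReal.div_lt_top (by norm_num) (by norm_num)).ne
  · exact (ENNReal.div_lt_top (by norm_num) (by norm_num)).ne
  · simp only [ENNReal.toReal_mul, ENNReal.toReal_div, ENNReal.toReal_ofNat, ENNReal.toReal_one]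
    norm_num
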